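/- Let g₄ be the Lie algebra with (1,0)-basis satisfying dω¹ = i ω¹∧(ω³+ω̄³), dω² = −i ω²∧(ω³+ω̄³), dω³ = ± ω¹∧ω̄¹. A Hermitian form 2F = i(r²ω¹∧ω̄¹ + s²ω²∧ω̄² + t²ω³∧ω̄³) + u ω¹∧ω̄² − ū ω²∧ω̄¹ + v ω²∧ω̄³ − v̄ ω³∧ω̄² + z ω¹∧ω̄³ − z̄ ω³∧ω̄¹ (with positivity constraints r²s² > |u|², s²t² > |v|², r²t² > |z|², r²s²t² + 2Re(i ū v̄ z) > t²|u|² + r²|v|² + s²|z|²) satisfies ∂∂̄F = 0 if and only if u = 0. -/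

import Mathlib

noncomputable section

/-- The space of invariant complex forms: the exterior algebra over the span of
`ω¹, ω², ω³, ω̄¹, ω̄², ω̄³` (indexed `0,…,5`). -/
abbrev Lambda : Type := ExteriorAlgebra ℂ (Fin 6 → ℂ)

/-- The generators `ω¹, ω², ω³, ω̄¹, ω̄², ω̄³` as degree-one elements. -/
def w (i : Fin 6) : Lambda := ExteriorAlgebra.ι ℂ (Pi.single i 1)

/-- Antiderivation property (Leibniz rule against `1`-forms): the defining extension
property of (the bigraded pieces of) the Chevalley–Eilenberg differential. -/
def IsAntideriv (D : Lambda →ₗ[ℂ] Lambda) : Prop :=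
  D 1 = 0 ∧ ∀ (v : Fin 6 → ℂ) (x : Lambda),
    D (ExteriorAlgebra.ι ℂ v * x) =
      D (ExteriorAlgebra.ι ℂ v) * x - ExteriorAlgebra.ι ℂ v * D x

/-- The generic Hermitian form
`2F = i(r²ω¹∧ω̄¹ + s²ω²∧ω̄² + t²ω³∧ω̄³) + uω¹∧ω̄² − ūω²∧ω̄¹ + vω²∧ω̄³ − v̄ω³∧ω̄²
  + zω¹∧ω̄³ − z̄ω³∧ω̄¹`. -/
def Fherm (r s t : ℝ) (u v z : ℂ) : Lambda :=
  (1 / 2 : ℂ) •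
    (Complex.I • ((r : ℂ) ^ 2 • (w 0 * w 3) + (s : ℂ) ^ 2 • (w 1 * w 4) +
        (t : ℂ) ^ 2 • (w 2 * w 5)) +
      u • (w 0 * w 4) - (starRingEnd ℂ) u • (w 1 * w 3) +
      v • (w 1 * w 5) - (starRingEnd ℂ) v • (w 2 * w 4) +
      z • (w 0 * w 5) - (starRingEnd ℂ) z • (w 2 * w 3))

/-- Positivity constraints making `Fherm r s t u v z` a Hermitian metric. -/
def HermPos (r s t : ℝ) (u v z : ℂ) : Prop :=
  r ≠ 0 ∧ s ≠ 0 ∧ t ≠ 0 ∧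
  r ^ 2 * s ^ 2 > Complex.normSq u ∧ s ^ 2 * t ^ 2 > Complex.normSq v ∧
  r ^ 2 * t ^ 2 > Complex.normSq z ∧
  r ^ 2 * s ^ 2 * t ^ 2 +
      2 * (Complex.I * (starRingEnd ℂ) u * (starRingEnd ℂ) v * z).re >
    t ^ 2 * Complex.normSq u + r ^ 2 * Complex.normSq v + s ^ 2 * Complex.normSq z

/-!
The differentials `∂̄` and `∂` are fixed on the generators by the structure equations of `g₄` and
extend by the Leibniz rule, so `∂∂̄F` is a mechanical computation: `∂̄F` is a combination of six
monomial 3-forms, and applying `∂` every contribution cancels except the one coming from the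
`u`-terms, leaving `∂∂̄F = 2u ω¹³∧ω̄²³ − 2ū ω²³∧ω̄¹³`. These two 4-forms are distinct members of
the standard basis of the exterior algebra, so `∂∂̄F` vanishes exactly when `u` does.
-/

theorem Module.Basis.exteriorAlgebra_image_of_strictMono {R M I : Type*} [CommRing R]
    [AddCommGroup M] [Module R M] [LinearOrder I] (b : Module.Basis I R M) {n : ℕ}
    {f : Fin n → I} (hf : StrictMono f) :
    b.ExteriorAlgebra (Finset.univ.image f) = ExteriorAlgebra.ιMulti R n (b ∘ f) := by
  have hcard : (Finset.univ.image f).card = n := by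
    rw [Finset.card_image_of_injective _ hf.injective, Finset.card_fin]
  rw [ExteriorAlgebra.basis_apply_ofCard b hcard, ExteriorAlgebra.ιMulti_family,
    Set.powersetCard.ofFinEmbEquiv_symm_apply]
  congr 2
  exact (Finset.orderEmbOfFin_unique hcard
    (fun x => Finset.mem_image_of_mem f (Finset.mem_univ x)) hf).symm

theorem Module.Basis.linearIndependent_pair {ι R M : Type*} [Semiring R] [AddCommMonoid M]
    [Module R M] (b : Module.Basis ι R M) {i j : ι} (hij : i ≠ j) :
    LinearIndependent R ![b i, b j] := by
  have hinj : Function.Injective ![i, j] := by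
    intro k l hkl
    fin_cases k <;> fin_cases l <;> simp_all [eq_comm]
  convert b.linearIndependent.comp _ hinj using 1
  ext k : 1
  fin_cases k <;> rfl

lemma w_mul_self (i : Fin 6) : w i * w i = 0 := ExteriorAlgebra.ι_sq_zero _

lemma w_mul_w_mul_self (i : Fin 6) (x : Lambda) : w i * (w i * x) = 0 := by
  rw [← mul_assoc, w_mul_self, zero_mul]

lemma w_anticomm (i j : Fin 6) : w i * w j = -(w j * w i) :=
  eq_neg_of_add_eq_zero_left (ExteriorAlgebra.ι_add_mul_swap _ _)

-- The hypothesis `j < i` orients these as `simp` rules that sort monomials increasingly.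
lemma w_mul_w_of_lt {i j : Fin 6} (_ : j < i) : w i * w j = -(w j * w i) := w_anticomm i j

lemma w_mul_w_mul_of_lt {i j : Fin 6} (_ : j < i) (x : Lambda) :
    w i * (w j * x) = -(w j * (w i * x)) := by
  rw [← mul_assoc, w_anticomm, neg_mul, mul_assoc]

lemma w_mul_w_mul_w_mul_w_eq_basis {i j k l : Fin 6} (hij : i < j) (hjk : j < k) (hkl : k < l) :
    w i * (w j * (w k * w l)) = (Pi.basisFun ℂ (Fin 6)).ExteriorAlgebra {i, j, k, l} := by
  have hf : StrictMono ![i, j, k, l] := by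
    refine Fin.strictMono_iff_lt_succ.2 fun m => ?_
    fin_cases m <;> assumption
  have himage : Finset.univ.image ![i, j, k, l] = {i, j, k, l} := by
    ext
    simp [Fin.exists_fin_succ, eq_comm]
  rw [← himage, Module.Basis.exteriorAlgebra_image_of_strictMono _ hf]
  simp [ExteriorAlgebra.ιMulti_apply, w, Matrix.vecTail]

lemma linearIndependent_w0245_w1235 :
    LinearIndependent ℂ ![w 0 * (w 2 * (w 4 * w 5)), w 1 * (w 2 * (w 3 * w 5))] := by
  rw [w_mul_w_mul_w_mul_w_eq_basis (by decide) (by decide) (by decide),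
    w_mul_w_mul_w_mul_w_eq_basis (by decide) (by decide) (by decide)]
  exact (Pi.basisFun ℂ (Fin 6)).ExteriorAlgebra.linearIndependent_pair (by decide)

lemma IsAntideriv.map_w_mul {D : Lambda →ₗ[ℂ] Lambda} (hD : IsAntideriv D) (i : Fin 6)
    (x : Lambda) : D (w i * x) = D (w i) * x - w i * D x :=
  hD.2 (Pi.single i 1) x

structure IsDelG4 (ε : ℂ) (D : Lambda →ₗ[ℂ] Lambda) : Prop where
  isAntideriv : IsAntideriv D
  map_w0 : D (w 0) = Complex.I • (w 0 * w 2)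
  map_w1 : D (w 1) = -Complex.I • (w 1 * w 2)
  map_w2 : D (w 2) = 0
  map_w3 : D (w 3) = -Complex.I • (w 3 * w 2)
  map_w4 : D (w 4) = Complex.I • (w 4 * w 2)
  map_w5 : D (w 5) = ε • (w 3 * w 0)

structure IsDelbarG4 (ε : ℂ) (D : Lambda →ₗ[ℂ] Lambda) : Prop where
  isAntideriv : IsAntideriv D
  map_w0 : D (w 0) = Complex.I • (w 0 * w 5)
  map_w1 : D (w 1) = -Complex.I • (w 1 * w 5)
  map_w2 : D (w 2) = ε • (w 0 * w 3)
  map_w3 : D (w 3) = -Complex.I • (w 3 * w 5)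
  map_w4 : D (w 4) = Complex.I • (w 4 * w 5)
  map_w5 : D (w 5) = 0

def delbarFherm (ε : ℂ) (t : ℝ) (u v z : ℂ) : Lambda :=
  (Complex.I * ε * (t : ℂ) ^ 2 / 2) • (w 0 * (w 3 * w 5))
    - (Complex.I * u) • (w 0 * (w 4 * w 5))
    - (Complex.I * starRingEnd ℂ u) • (w 1 * (w 3 * w 5))
    - (ε * starRingEnd ℂ v / 2) • (w 0 * (w 3 * w 4))
    + (Complex.I * starRingEnd ℂ v / 2) • (w 2 * (w 4 * w 5))
    - (Complex.I * starRingEnd ℂ z / 2) • (w 2 * (w 3 * w 5))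

lemma IsDelbarG4.map_Fherm {ε : ℂ} {D : Lambda →ₗ[ℂ] Lambda} (hD : IsDelbarG4 ε D)
    (r s t : ℝ) (u v z : ℂ) : D (Fherm r s t u v z) = delbarFherm ε t u v z := by
  simp +decide only [Fherm, delbarFherm, map_smul, map_add, map_sub,
      smul_mul_assoc, mul_smul_comm, mul_assoc, hD.isAntideriv.map_w_mul,
      hD.map_w0, hD.map_w1, hD.map_w2, hD.map_w3, hD.map_w4, hD.map_w5,
      w_mul_self, w_mul_w_of_lt, mul_zero, smul_zero, neg_mul, mul_neg, smul_neg, neg_neg,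
      neg_zero, sub_zero, zero_sub, add_zero, neg_smul, smul_sub, smul_add]
  match_scalars <;> ring

lemma IsDelG4.map_delbarFherm {ε : ℂ} {D : Lambda →ₗ[ℂ] Lambda} (hD : IsDelG4 ε D)
    (t : ℝ) (u v z : ℂ) :
    D (delbarFherm ε t u v z) =
      (2 * u) • (w 0 * (w 2 * (w 4 * w 5))) -
        (2 * starRingEnd ℂ u) • (w 1 * (w 2 * (w 3 * w 5))) := by
  simp +decide only [delbarFherm, map_smul, map_add, map_sub,
      smul_mul_assoc, mul_smul_comm, mul_assoc, hD.isAntideriv.map_w_mul,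
      hD.map_w0, hD.map_w1, hD.map_w2, hD.map_w3, hD.map_w4, hD.map_w5,
      w_mul_self, w_mul_w_mul_self, w_mul_w_of_lt, w_mul_w_mul_of_lt, mul_zero, zero_mul,
      smul_zero, neg_mul, mul_neg, smul_neg, neg_neg, neg_zero, sub_zero, zero_sub, neg_smul,
      smul_sub, smul_smul, mul_sub, sub_self]
  match_scalars <;> ring_nf <;> rw [Complex.I_sq] <;> ring

theorem stmt11_general (ε : ℂ)
    (Dp Db : Lambda →ₗ[ℂ] Lambda) (hDp : IsAntideriv Dp) (hDb : IsAntideriv Db)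
    (hp0 : Dp (w 0) = Complex.I • (w 0 * w 2))
    (hp1 : Dp (w 1) = -Complex.I • (w 1 * w 2))
    (hp2 : Dp (w 2) = 0)
    (hp3 : Dp (w 3) = -Complex.I • (w 3 * w 2))
    (hp4 : Dp (w 4) = Complex.I • (w 4 * w 2))
    (hp5 : Dp (w 5) = ε • (w 3 * w 0))
    (hb0 : Db (w 0) = Complex.I • (w 0 * w 5))
    (hb1 : Db (w 1) = -Complex.I • (w 1 * w 5))
    (hb2 : Db (w 2) = ε • (w 0 * w 3))
    (hb3 : Db (w 3) = -Complex.I • (w 3 * w 5))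
    (hb4 : Db (w 4) = Complex.I • (w 4 * w 5))
    (hb5 : Db (w 5) = 0)
    (r s t : ℝ) (u v z : ℂ) :
    Dp (Db (Fherm r s t u v z)) = 0 ↔ u = 0 := by
  have hDel : IsDelG4 ε Dp := ⟨hDp, hp0, hp1, hp2, hp3, hp4, hp5⟩
  have hDelbar : IsDelbarG4 ε Db := ⟨hDb, hb0, hb1, hb2, hb3, hb4, hb5⟩
  rw [hDelbar.map_Fherm, hDel.map_delbarFherm]
  constructor
  · intro h
    have hu := (LinearIndependent.pair_iff.1 linearIndependent_w0245_w1235 (2 * u)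
      (-(2 * starRingEnd ℂ u)) (by rwa [neg_smul, ← sub_eq_add_neg])).1
    exact (mul_eq_zero.1 hu).resolve_left two_ne_zero
  · rintro rfl
    simp

/-- on `g₄` (`dω¹ = iω¹∧(ω³+ω̄³)`, `dω² = −iω²∧(ω³+ω̄³)`,
`dω³ = ±ω¹∧ω̄¹`), a Hermitian form `F` is SKT (`∂∂̄F = 0`) iff `u = 0`. -/
theorem stmt11 (ε : ℂ) (hε : ε = 1 ∨ ε = -1)
    (Dp Db : Lambda →ₗ[ℂ] Lambda) (hDp : IsAntideriv Dp) (hDb : IsAntideriv Db)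
    (hp0 : Dp (w 0) = Complex.I • (w 0 * w 2))
    (hp1 : Dp (w 1) = -Complex.I • (w 1 * w 2))
    (hp2 : Dp (w 2) = 0)
    (hp3 : Dp (w 3) = -Complex.I • (w 3 * w 2))
    (hp4 : Dp (w 4) = Complex.I • (w 4 * w 2))
    (hp5 : Dp (w 5) = ε • (w 3 * w 0))
    (hb0 : Db (w 0) = Complex.I • (w 0 * w 5))
    (hb1 : Db (w 1) = -Complex.I • (w 1 * w 5))
    (hb2 : Db (w 2) = ε • (w 0 * w 3))
    (hb3 : Db (w 3) = -Complex.I • (w 3 * w 5))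
    (hb4 : Db (w 4) = Complex.I • (w 4 * w 5))
    (hb5 : Db (w 5) = 0)
    (r s t : ℝ) (u v z : ℂ) (hF : HermPos r s t u v z) :
    Dp (Db (Fherm r s t u v z)) = 0 ↔ u = 0 :=
  stmt11_general ε Dp Db hDp hDb hp0 hp1 hp2 hp3 hp4 hp5 hb0 hb1 hb2 hb3 hb4 hb5 r s t u v z
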